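/- Define κ(t) = sup_{u ∈ (0,∞)} log(1+u)/u^t for t ∈ (0,1], and let g(t) = t·κ(t). Then g is nondecreasing on (0,1], g(1) = 1, and lim_{t→0⁺} g(t) = 1/e. In particular, 1/(e·t) < κ(t) ≤ 1/t for all t ∈ (0,1], with equality on the right at t = 1. -/

import Mathlib

/-!
Substituting `x = u ^ t` turns `t * (log (1 + u) / u ^ t)` into `t * log (1 + x ^ t⁻¹) / x`, and
`t * log (1 + x ^ t⁻¹)` is the logarithm of the `ℓ^{1/t}`-norm of `(1, x)`, which increases with `t`
(subadditivity of `y ↦ y ^ r` for `r ≤ 1`). This gives the monotonicity of `t κ(t)` and, comparing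
with `t = 1`, the bound `t κ(t) ≤ sup log (1 + x) / x = 1`. For the limit at `0`, a single well-chosen
`u` gives `t κ(t) > 1 / e`, while `log y ≤ y / e` gives `t κ(t) ≤ t + 1 / e`.
-/

open MeasureTheory Set
open scoped ENNReal NNReal Real

/-- `κ(t) = sup_{u > 0} log(1+u)/u^t`. -/
noncomputable def kappaSup (t : ℝ) : ℝ :=
  ⨆ u : Set.Ioi (0 : ℝ), Real.log (1 + (u : ℝ)) / (u : ℝ) ^ t

open Real Filter Topology

lemma mul_log_one_add_rpow_inv_le_of_le {x a b : ℝ} (hx : 0 < x) (ha : 0 < a) (hab : a ≤ b) :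
    a * log (1 + x ^ a⁻¹) ≤ b * log (1 + x ^ b⁻¹) := by
  have hb : 0 < b := ha.trans_le hab
  set y := x ^ a⁻¹
  have hy : 0 < y := rpow_pos_of_pos hx _
  have hxy : x ^ b⁻¹ = y ^ (a / b) := by
    rw [← rpow_mul hx.le]
    congr 1
    field_simp
  have hsub : (1 + y) ^ (a / b) ≤ 1 + y ^ (a / b) := by
    simpa using rpow_add_le_add_rpow zero_le_one hy.le (div_nonneg ha.le hb.le)
      ((div_le_one hb).2 hab)
  calc a * log (1 + y) = b * log ((1 + y) ^ (a / b)) := by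
        rw [log_rpow (by positivity)]
        field_simp
    _ ≤ b * log (1 + x ^ b⁻¹) := by
        rw [hxy]
        gcongr

lemma mul_log_one_add_div_rpow_le_of_le {t s u : ℝ} (ht : 0 < t) (hts : t ≤ s) (hu : 0 < u) :
    t * (log (1 + u) / u ^ t) ≤ s * (log (1 + (u ^ t) ^ s⁻¹) / ((u ^ t) ^ s⁻¹) ^ s) := by
  have hs : 0 < s := ht.trans_le hts
  set x := u ^ t with hx
  have hx0 : 0 < x := rpow_pos_of_pos hu t
  have hux : u = x ^ t⁻¹ := by rw [hx, ← rpow_mul hu.le, mul_inv_cancel₀ ht.ne', rpow_one]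
  have hvx : (x ^ s⁻¹) ^ s = x := by rw [← rpow_mul hx0.le, inv_mul_cancel₀ hs.ne', rpow_one]
  rw [hvx, ← mul_div_assoc, ← mul_div_assoc, hux]
  exact div_le_div_of_nonneg_right (mul_log_one_add_rpow_inv_le_of_le hx0 ht hts) hx0.le

lemma mul_log_one_add_div_rpow_le_one {t u : ℝ} (ht : 0 < t) (ht1 : t ≤ 1) (hu : 0 < u) :
    t * (log (1 + u) / u ^ t) ≤ 1 := by
  set v := (u ^ t) ^ (1 : ℝ)⁻¹
  have hv : 0 < v := by positivity
  calc t * (log (1 + u) / u ^ t) ≤ 1 * (log (1 + v) / v ^ (1 : ℝ)) :=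
        mul_log_one_add_div_rpow_le_of_le ht ht1 hu
    _ ≤ 1 := by
        rw [one_mul, rpow_one, div_le_one hv]
        linarith [log_le_sub_one_of_pos (by positivity : 0 < 1 + v)]

lemma log_le_div_exp_one {y : ℝ} (hy : 0 < y) : log y ≤ y / exp 1 := by
  have := log_le_sub_one_of_pos (div_pos hy (exp_pos 1))
  rw [log_div hy.ne' (exp_pos 1).ne', log_exp] at this
  linarith

lemma log_one_add_le_one_add_log {u : ℝ} (hu : 1 ≤ u) : log (1 + u) ≤ 1 + log u := by
  have hu0 : 0 < u := zero_lt_one.trans_le hu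
  calc log (1 + u) ≤ log (exp 1 * u) := by
        gcongr
        nlinarith [add_one_le_exp (1 : ℝ)]
    _ = 1 + log u := by rw [log_mul (exp_pos 1).ne' hu0.ne', log_exp]

lemma mul_log_one_add_div_rpow_le_add {t u : ℝ} (ht : 0 < t) (ht1 : t ≤ 1) (hu : 0 < u) :
    t * (log (1 + u) / u ^ t) ≤ t + 1 / exp 1 := by
  have hut : 0 < u ^ t := rpow_pos_of_pos hu t
  rw [mul_div_assoc', div_le_iff₀ hut]
  rcases le_total u 1 with hu1 | hu1
  · have hlog : log (1 + u) ≤ u := by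
      linarith [log_le_sub_one_of_pos (by positivity : 0 < 1 + u)]
    have : u ≤ u ^ t := by simpa using rpow_le_rpow_of_exponent_ge hu hu1 ht1
    nlinarith [one_div_pos.2 (exp_pos 1)]
  · have hut1 : 1 ≤ u ^ t := one_le_rpow hu1 ht.le
    have hlog := log_le_div_exp_one hut
    rw [log_rpow hu, div_eq_mul_one_div, mul_comm] at hlog
    nlinarith [log_one_add_le_one_add_log hu1]

section kappaSup

variable {t : ℝ}

lemma bddAbove_range_log_one_add_div_rpow (ht : 0 < t) (ht1 : t ≤ 1) :
    BddAbove (range fun u : Ioi (0 : ℝ) => log (1 + (u : ℝ)) / (u : ℝ) ^ t) := by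
  refine ⟨1 / t, ?_⟩
  rintro _ ⟨u, rfl⟩
  exact (le_div_iff₀' ht).2 (mul_log_one_add_div_rpow_le_one ht ht1 u.2)

lemma log_one_add_div_rpow_le_kappaSup (ht : 0 < t) (ht1 : t ≤ 1) {u : ℝ} (hu : 0 < u) :
    log (1 + u) / u ^ t ≤ kappaSup t :=
  le_ciSup (bddAbove_range_log_one_add_div_rpow ht ht1) (⟨u, hu⟩ : Ioi (0 : ℝ))

lemma kappaSup_le_one_div (ht : 0 < t) (ht1 : t ≤ 1) : kappaSup t ≤ 1 / t :=
  ciSup_le fun u => (le_div_iff₀' ht).2 (mul_log_one_add_div_rpow_le_one ht ht1 u.2)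

lemma mul_kappaSup_le_add (ht : 0 < t) (ht1 : t ≤ 1) : t * kappaSup t ≤ t + 1 / exp 1 := by
  rw [kappaSup, mul_iSup_of_nonneg ht.le]
  exact ciSup_le fun u => mul_log_one_add_div_rpow_le_add ht ht1 u.2

lemma one_div_exp_one_lt_mul_kappaSup (ht : 0 < t) (ht1 : t ≤ 1) :
    1 / exp 1 < t * kappaSup t := by
  -- the witness `u = e^{1/t} - 1` has `log (1 + u) = 1 / t` and `u ^ t < e`
  set u := exp (1 / t) - 1
  have hu : 0 < u := by simp only [u, sub_pos, one_lt_exp_iff]; positivity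
  have hu_pow : u ^ t < exp 1 :=
    calc u ^ t < exp (1 / t) ^ t := rpow_lt_rpow hu.le (by simp only [u]; linarith) ht
      _ = exp 1 := by rw [← exp_mul, one_div, inv_mul_cancel₀ ht.ne']
  calc 1 / exp 1 < 1 / u ^ t := one_div_lt_one_div_of_lt (rpow_pos_of_pos hu t) hu_pow
    _ = t * (log (1 + u) / u ^ t) := by
        rw [add_sub_cancel, log_exp]
        field_simp
    _ ≤ t * kappaSup t := by
        gcongr
        exact log_one_add_div_rpow_le_kappaSup ht ht1 hu

end kappaSup

lemma monotoneOn_mul_kappaSup : MonotoneOn (fun t : ℝ => t * kappaSup t) (Ioc 0 1) := by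
  rintro t ⟨ht, -⟩ s ⟨hs, hs1⟩ hts
  dsimp only
  rw [kappaSup, mul_iSup_of_nonneg ht.le]
  refine ciSup_le fun u => (mul_log_one_add_div_rpow_le_of_le ht hts u.2).trans ?_
  gcongr
  exact log_one_add_div_rpow_le_kappaSup hs hs1 (by have : (0 : ℝ) < u := u.2; positivity)

lemma kappaSup_one : kappaSup 1 = 1 := by
  refine le_antisymm (by simpa using kappaSup_le_one_div one_pos le_rfl) ?_
  have hslope := (hasDerivAt_log one_ne_zero).tendsto_slope_zero_right
  refine le_of_tendsto (by simpa using hslope) (eventually_mem_nhdsWithin.mono fun u hu => ?_)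
  simpa [div_eq_inv_mul] using log_one_add_div_rpow_le_kappaSup one_pos le_rfl hu

lemma tendsto_mul_kappaSup :
    Tendsto (fun t : ℝ => t * kappaSup t) (𝓝[>] 0) (𝓝 (1 / exp 1)) := by
  have hupper : Tendsto (fun t : ℝ => t + 1 / exp 1) (𝓝[>] 0) (𝓝 (1 / exp 1)) :=
    ((continuous_add_const _).tendsto' 0 _ (zero_add _)).mono_left nhdsWithin_le_nhds
  have hIoc : ∀ᶠ t in 𝓝[>] (0 : ℝ), t ∈ Ioc 0 1 := Ioc_mem_nhdsGT one_pos
  refine tendsto_of_tendsto_of_tendsto_of_le_of_le' tendsto_const_nhds hupper ?_ ?_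
  · exact hIoc.mono fun t ht => (one_div_exp_one_lt_mul_kappaSup ht.1 ht.2).le
  · exact hIoc.mono fun t ht => mul_kappaSup_le_add ht.1 ht.2

/-- **Properties of `κ` (Lemma 3).** With `g(t) = t κ(t)`: `g` is nondecreasing on `(0,1]`,
`g(1) = 1`, and `g(t) → 1/e` as `t → 0⁺`. In particular `1/(e t) < κ(t) ≤ 1/t` for all
`t ∈ (0,1]`, with equality on the right at `t = 1`. -/
theorem kappa_properties :
    MonotoneOn (fun t : ℝ => t * kappaSup t) (Set.Ioc (0 : ℝ) 1) ∧
    (1 : ℝ) * kappaSup 1 = 1 ∧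
    Filter.Tendsto (fun t : ℝ => t * kappaSup t) (nhdsWithin 0 (Set.Ioi 0))
      (nhds (1 / Real.exp 1)) ∧
    (∀ t ∈ Set.Ioc (0 : ℝ) 1, 1 / (Real.exp 1 * t) < kappaSup t ∧ kappaSup t ≤ 1 / t) ∧
    kappaSup 1 = 1 / 1 := by
  refine ⟨monotoneOn_mul_kappaSup, by rw [kappaSup_one, mul_one], tendsto_mul_kappaSup,
    fun t ⟨ht, ht1⟩ => ⟨?_, kappaSup_le_one_div ht ht1⟩, by rw [kappaSup_one, div_one]⟩
  rw [← div_div, div_lt_iff₀' ht]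
  exact one_div_exp_one_lt_mul_kappaSup ht ht1
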